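/- For a thrice-differentiable trajectory x : [0,T] → ℝ³ with ‖x⃛(t)‖ ≤ J_max and thrust f(t) = m·‖ẍ(t) + g·e₃‖ ≥ f_min > 0 for all t, the body angular rate magnitude satisfies ‖ω(t)‖ ≤ m·J_max / f_min, where ω is determined from the flatness relation ω = (m/f)·P·R⁻¹·x⃛ with P the projection onto the first two coordinates and R a rotation matrix. -/

import Mathlib

/-!
Orthogonal matrices act isometrically on Euclidean space, and `diag(1,1,0)` is a contraction,
so `‖ω‖ ≤ (m/f)·‖x⃛‖ ≤ m·J_max/f_min`.
-/

open Matrix Set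

namespace Matrix

variable {n 𝕜 : Type*} [Fintype n] [DecidableEq n] [RCLike 𝕜]

theorem inv_mem_unitaryGroup {A : Matrix n n 𝕜} (hA : A ∈ unitaryGroup n 𝕜) :
    A⁻¹ ∈ unitaryGroup n 𝕜 := by
  rw [inv_eq_left_inv (Unitary.star_mul_self_of_mem hA)]
  exact Unitary.star_mem hA

theorem norm_toLp_mulVec_of_mem_unitaryGroup {A : Matrix n n 𝕜} (hA : A ∈ unitaryGroup n 𝕜)
    (v : n → 𝕜) : ‖(WithLp.toLp 2 (A *ᵥ v) : EuclideanSpace 𝕜 n)‖ = ‖WithLp.toLp 2 v‖ := by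
  rw [← toEuclideanCLM_toLp]
  exact ContinuousLinearMap.norm_map_of_mem_unitary (Unitary.map_mem toEuclideanCLM hA) _

theorem norm_toLp_diagonal_mulVec_le {d : n → 𝕜} (hd : ∀ i, ‖d i‖ ≤ 1) (v : n → 𝕜) :
    ‖(WithLp.toLp 2 (diagonal d *ᵥ v) : EuclideanSpace 𝕜 n)‖ ≤ ‖WithLp.toLp 2 v‖ := by
  simp only [EuclideanSpace.norm_eq, mulVec_diagonal, norm_mul, mul_pow]
  gcongr with i
  exact mul_le_of_le_one_left (by positivity) (pow_le_one₀ (norm_nonneg _) (hd i))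

end Matrix

/-- Under the flatness relation `ω = (m/f)·P·R⁻¹·x⃛` with `P = diag(1,1,0)`,
bounded jerk `‖x⃛‖ ≤ J_max` and thrust `f ≥ f_min > 0`, the body angular rate
satisfies `‖ω‖ ≤ m·J_max/f_min`. -/
theorem body_rate_bound
    (T m Jmax fmin : ℝ) (hm : 0 < m) (hfmin : 0 < fmin)
    (jerk ω : ℝ → EuclideanSpace ℝ (Fin 3))
    (f : ℝ → ℝ)
    (R : ℝ → Matrix (Fin 3) (Fin 3) ℝ)
    (hR : ∀ t ∈ Icc (0:ℝ) T, R t ∈ Matrix.orthogonalGroup (Fin 3) ℝ)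
    (hjerk : ∀ t ∈ Icc (0:ℝ) T, ‖jerk t‖ ≤ Jmax)
    (hf : ∀ t ∈ Icc (0:ℝ) T, fmin ≤ f t)
    (P : Matrix (Fin 3) (Fin 3) ℝ)
    (hP : P = Matrix.diagonal ![1, 1, 0])
    (hω : ∀ t ∈ Icc (0:ℝ) T,
      ω t = (m / f t) • (WithLp.toLp 2 (P.mulVec ((R t)⁻¹.mulVec (jerk t))) : EuclideanSpace ℝ (Fin 3))) :
    ∀ t ∈ Icc (0:ℝ) T, ‖ω t‖ ≤ m * Jmax / fmin := by
  intro t ht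
  have hft : 0 < f t := hfmin.trans_le (hf t ht)
  have hP_contracts : ∀ i, ‖(![1, 1, 0] : Fin 3 → ℝ) i‖ ≤ 1 := by
    intro i; fin_cases i <;> norm_num
  have h_body_jerk : ‖(WithLp.toLp 2 (P *ᵥ (R t)⁻¹ *ᵥ jerk t) : EuclideanSpace ℝ (Fin 3))‖
      ≤ ‖jerk t‖ := by
    rw [hP]
    calc _ ≤ ‖(WithLp.toLp 2 ((R t)⁻¹ *ᵥ jerk t) : EuclideanSpace ℝ (Fin 3))‖ :=
          norm_toLp_diagonal_mulVec_le hP_contracts _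
      _ = ‖jerk t‖ := norm_toLp_mulVec_of_mem_unitaryGroup (inv_mem_unitaryGroup (hR t ht)) _
  calc ‖ω t‖ = m / f t * ‖(WithLp.toLp 2 (P *ᵥ (R t)⁻¹ *ᵥ jerk t) : EuclideanSpace ℝ (Fin 3))‖ := by
        rw [hω t ht, norm_smul, Real.norm_of_nonneg (by positivity)]
    _ ≤ m / f t * Jmax := by gcongr; exact h_body_jerk.trans (hjerk t ht)
    _ = m * Jmax / f t := by ring
    _ ≤ m * Jmax / fmin := by
        have hJmax : 0 ≤ Jmax := (norm_nonneg _).trans (hjerk t ht)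
        gcongr; exact hf t ht
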